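/- arXiv:2503.13643 — 3 statements merged into one kernel-verified Lean document; each statement's English description precedes it below -/
import Mathlib

section
/- Let g : N -> R be a nondecreasing sequence, rho : N -> R a nonnegative sequence, and define sequences TC, T : N -> R recursively by T_{k+1} = T_k + rho_{k+1} and TC_{k+1} = TC_k + g_{k+1} * rho_{k+1}, with initial values TC_0 in R and T_0 > 0. Let c_k = TC_k / T_k. If for some index K we have g_{K+1} > c_K, then for every k >= K + 1 it holds that g_k > c_k. -/
/-- once a state's cost rate exceeds the running average,
all subsequent states' cost rates exceed their running averages. -/
theorem ghat_exceeds_average_forever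
    (g rho TC T : ℕ → ℝ) (hg : Monotone g) (hrho : ∀ k, 0 ≤ rho k)
    (hT0 : 0 < T 0)
    (hTrec : ∀ k, T (k + 1) = T k + rho (k + 1))
    (hTCrec : ∀ k, TC (k + 1) = TC k + g (k + 1) * rho (k + 1))
    (K : ℕ) (hK : g (K + 1) > TC K / T K) :
    ∀ k, K + 1 ≤ k → g k > TC k / T k := by
  have hTpos : ∀ k, 0 < T k := by
    intro k
    induction k with
    | zero => exact hT0
    | succ n ih => rw [hTrec]; exact add_pos_of_pos_of_nonneg ih (hrho _)
  have step : ∀ j, TC j / T j < g (j + 1) → TC (j + 1) / T (j + 1) < g (j + 1) := by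
    intro j h
    rw [div_lt_iff₀ (hTpos j)] at h
    rw [div_lt_iff₀ (hTpos (j + 1)), hTCrec, hTrec]
    nlinarith [hrho (j + 1)]
  have key : ∀ n, TC (K + 1 + n) / T (K + 1 + n) < g (K + 1 + n) := by
    intro n
    induction n with
    | zero => exact step K hK
    | succ n ih =>
      have h2 : TC (K + 1 + n) / T (K + 1 + n) < g (K + 1 + n + 1) :=
        lt_of_lt_of_le ih (hg (Nat.le_succ _))
      exact step (K + 1 + n) h2
  intro k hk
  obtain ⟨n, rfl⟩ := Nat.exists_eq_add_of_le hk
  exact key n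
end

section
/- Fix lambda > 0 and a natural number Q. The function T -> S(lambda * T, Q) is differentiable at every T > 0 with derivative lambda * Ptail(lambda * T, Q). -/
open scoped BigOperators

/-- Poisson probability mass function with mean `μ` at `r`. -/
noncomputable def poissonPMF (μ : ℝ) (r : ℕ) : ℝ :=
  Real.exp (-μ) * μ ^ r / (Nat.factorial r)

/-- Poisson tail probability `P(D ≥ k)` for a natural-number threshold `k`. -/
noncomputable def Ptail (μ : ℝ) (k : ℕ) : ℝ :=
  ∑' r : ℕ, if k ≤ r then poissonPMF μ r else 0

/-- Expected shortage `E[(D - Q)^+]` for a natural-number capacity `Q`. -/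
noncomputable def shortage (μ : ℝ) (Q : ℕ) : ℝ :=
  ∑' r : ℕ, if Q ≤ r then ((r : ℝ) - (Q : ℝ)) * poissonPMF μ r else 0

lemma hasSum_pow_div_factorial (μ : ℝ) :
    HasSum (fun n : ℕ => μ ^ n / n.factorial) (Real.exp μ) := by
  rw [Real.exp_eq_exp_ℝ]
  exact NormedSpace.expSeries_div_hasSum_exp μ

lemma hasSum_poissonPMF (μ : ℝ) : HasSum (fun r => poissonPMF μ r) 1 := by
  have h := (hasSum_pow_div_factorial μ).mul_left (Real.exp (-μ))
  have : Real.exp (-μ) * Real.exp μ = 1 := by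
    rw [← Real.exp_add]; simp
  rw [this] at h
  convert h using 2 with r
  · rfl
  unfold poissonPMF
  ring

lemma hasSum_mul_poissonPMF (μ : ℝ) :
    HasSum (fun r : ℕ => (r : ℝ) * poissonPMF μ r) μ := by
  have h0 : HasSum (fun n : ℕ => ((n+1 : ℕ) : ℝ) * poissonPMF μ (n+1)) μ := by
    have h := (hasSum_poissonPMF μ).mul_left μ
    rw [mul_one] at h
    convert h using 2 with n
    · rfl
    unfold poissonPMF
    rw [Nat.factorial_succ]
    push_cast
    field_simp
    ring
  have h1 : HasSum (fun n : ℕ => ((n+1 : ℕ) : ℝ) * poissonPMF μ (n+1))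
      (μ - ∑ i ∈ Finset.range 1, (i : ℝ) * poissonPMF μ i) := by simpa using h0
  exact (hasSum_nat_add_iff' (f := fun r : ℕ => (r : ℝ) * poissonPMF μ r) 1).mp h1


lemma Ptail_eq (μ : ℝ) (Q : ℕ) :
    Ptail μ Q = 1 - ∑ r ∈ Finset.range Q, poissonPMF μ r := by
  have hs := hasSum_poissonPMF μ
  have hfin : Summable (fun r : ℕ => if r ∈ Finset.range Q then poissonPMF μ r else 0) :=
    summable_of_ne_finset_zero (s := Finset.range Q) (fun b hb => if_neg hb)
  have heq : (fun r : ℕ => if Q ≤ r then poissonPMF μ r else 0)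
      = fun r : ℕ => poissonPMF μ r - (if r ∈ Finset.range Q then poissonPMF μ r else 0) := by
    funext r
    by_cases h : Q ≤ r
    · rw [if_pos h, if_neg (by simp; omega)]
      ring
    · rw [if_neg h, if_pos (by simp; omega)]
      ring
  rw [Ptail, heq, Summable.tsum_sub hs.summable hfin, hs.tsum_eq,
    tsum_eq_sum (s := Finset.range Q) (fun b hb => if_neg hb)]
  congr 1
  exact Finset.sum_congr rfl (fun r hr => if_pos hr)

lemma shortage_eq (μ : ℝ) (Q : ℕ) :
    shortage μ Q = μ - Q
      - ∑ r ∈ Finset.range Q, ((r : ℝ) - (Q : ℝ)) * poissonPMF μ r := by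
  have hs : HasSum (fun r : ℕ => ((r : ℝ) - (Q : ℝ)) * poissonPMF μ r) (μ - Q) := by
    have := (hasSum_mul_poissonPMF μ).sub ((hasSum_poissonPMF μ).mul_left (Q : ℝ))
    rw [mul_one] at this
    have h2 : (fun r : ℕ => ((r : ℝ) - (Q : ℝ)) * poissonPMF μ r)
        = fun r : ℕ => (r : ℝ) * poissonPMF μ r - (Q : ℝ) * poissonPMF μ r := by
      funext r; ring
    rw [h2]; exact this
  have hfin : Summable (fun r : ℕ => if r ∈ Finset.range Q then ((r : ℝ) - (Q : ℝ)) * poissonPMF μ r else 0) :=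
    summable_of_ne_finset_zero (s := Finset.range Q) (fun b hb => if_neg hb)
  have heq : (fun r : ℕ => if Q ≤ r then ((r : ℝ) - (Q : ℝ)) * poissonPMF μ r else 0)
      = fun r : ℕ => ((r : ℝ) - (Q : ℝ)) * poissonPMF μ r
          - (if r ∈ Finset.range Q then ((r : ℝ) - (Q : ℝ)) * poissonPMF μ r else 0) := by
    funext r
    by_cases h : Q ≤ r
    · rw [if_pos h, if_neg (by simp; omega)]
      ring
    · rw [if_neg h, if_pos (by simp; omega)]
      ring
  rw [shortage, heq, Summable.tsum_sub hs.summable hfin, hs.tsum_eq,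
    tsum_eq_sum (s := Finset.range Q) (fun b hb => if_neg hb)]
  congr 1
  exact Finset.sum_congr rfl (fun r hr => if_pos hr)

lemma poisson_hasDerivAt (lam T : ℝ) (r : ℕ) :
    HasDerivAt (fun t => poissonPMF (lam * t) r)
      (lam * (Real.exp (-(lam * T)) * ((r : ℝ) * (lam * T) ^ (r - 1) - (lam * T) ^ r)
        / (r.factorial : ℝ))) T := by
  set μ := lam * T with hμ
  have hinner : HasDerivAt (fun t : ℝ => lam * t) lam T := by
    simpa using (hasDerivAt_id T).const_mul lam
  have h1 : HasDerivAt (fun x : ℝ => Real.exp (-x)) (Real.exp (-μ) * (-1)) μ :=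
    ((hasDerivAt_id μ).neg).exp
  have h2 : HasDerivAt (fun x : ℝ => x ^ r) ((r : ℝ) * μ ^ (r - 1)) μ := hasDerivAt_pow r μ
  have houter : HasDerivAt (fun x : ℝ => Real.exp (-x) * x ^ r / (r.factorial : ℝ))
      ((Real.exp (-μ) * (-1) * μ ^ r + Real.exp (-μ) * ((r : ℝ) * μ ^ (r - 1)))
        / (r.factorial : ℝ)) μ := (h1.mul h2).div_const _
  have := (houter.comp T hinner)
  have heq : (Real.exp (-μ) * (-1) * μ ^ r + Real.exp (-μ) * ((r : ℝ) * μ ^ (r - 1)))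
        / (r.factorial : ℝ) * lam
      = lam * (Real.exp (-μ) * ((r : ℝ) * μ ^ (r - 1) - μ ^ r) / (r.factorial : ℝ)) := by
    ring
  rw [heq] at this
  exact this

lemma telescope1 (μ : ℝ) (Q : ℕ) :
    ∑ r ∈ Finset.range (Q + 1), ((r : ℝ) * μ ^ (r - 1) - μ ^ r) / (r.factorial : ℝ)
      = -(μ ^ Q / (Q.factorial : ℝ)) := by
  induction Q with
  | zero => simp
  | succ n ih =>
    rw [Finset.sum_range_succ, ih]
    have hn : ((n.factorial : ℝ)) ≠ 0 := by exact_mod_cast n.factorial_ne_zero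
    have hn1 : (((n+1).factorial : ℝ)) ≠ 0 := by exact_mod_cast (n+1).factorial_ne_zero
    rw [Nat.factorial_succ]
    push_cast
    field_simp
    ring

lemma telescope2 (μ : ℝ) (Q : ℕ) :
    ∑ r ∈ Finset.range Q,
        ((Q : ℝ) - r) * (Real.exp (-μ) * ((r : ℝ) * μ ^ (r - 1) - μ ^ r) / (r.factorial : ℝ))
      = -∑ r ∈ Finset.range Q, poissonPMF μ r := by
  set c : ℕ → ℝ := fun r => Real.exp (-μ) * ((r : ℝ) * μ ^ (r - 1) - μ ^ r) / (r.factorial : ℝ)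
    with hc
  induction Q with
  | zero => simp
  | succ n ih =>
    have step : ∀ r ∈ Finset.range (n + 1),
        (((n + 1 : ℕ) : ℝ) - r) * c r = ((n : ℝ) - r) * c r + c r := by
      intro r _; push_cast; ring
    rw [Finset.sum_congr rfl step, Finset.sum_add_distrib]
    have h1 : ∑ r ∈ Finset.range (n + 1), ((n : ℝ) - r) * c r
        = ∑ r ∈ Finset.range n, ((n : ℝ) - r) * c r := by
      rw [Finset.sum_range_succ]
      simp
    have h2 : ∑ r ∈ Finset.range (n + 1), c r = -(poissonPMF μ n) := by
      have ht := telescope1 μ n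
      have hcr : ∀ r ∈ Finset.range (n + 1),
          c r = Real.exp (-μ) * (((r : ℝ) * μ ^ (r - 1) - μ ^ r) / (r.factorial : ℝ)) := by
        intro r _; rw [hc]; ring
      rw [Finset.sum_congr rfl hcr, ← Finset.mul_sum, ht]
      unfold poissonPMF
      ring
    rw [h1, ih, h2, Finset.sum_range_succ]
    ring


/-- derivative of the expected shortage in the cycle length. -/
theorem shortage_hasDerivAt (lam : ℝ) (hlam : 0 < lam) (Q : ℕ)
    (T : ℝ) (hT : 0 < T) :
    HasDerivAt (fun t => shortage (lam * t) Q)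
      (lam * Ptail (lam * T) Q) T := by
  set μ := lam * T with hμ
  set c : ℕ → ℝ := fun r =>
    Real.exp (-μ) * ((r : ℝ) * μ ^ (r - 1) - μ ^ r) / (r.factorial : ℝ) with hc
  have hfun : (fun t => shortage (lam * t) Q)
      = fun t => lam * t - (Q : ℝ)
          - ∑ r ∈ Finset.range Q, ((r : ℝ) - (Q : ℝ)) * poissonPMF (lam * t) r := by
    funext t; exact shortage_eq (lam * t) Q
  rw [hfun]
  have hlin : HasDerivAt (fun t : ℝ => lam * t - (Q : ℝ)) lam T := by
    simpa using ((hasDerivAt_id T).const_mul lam).sub_const (Q : ℝ)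
  have hsum : HasDerivAt
      (fun t => ∑ r ∈ Finset.range Q, ((r : ℝ) - (Q : ℝ)) * poissonPMF (lam * t) r)
      (∑ r ∈ Finset.range Q, ((r : ℝ) - (Q : ℝ)) * (lam * c r)) T := by
    apply HasDerivAt.fun_sum
    intro r _
    exact (poisson_hasDerivAt lam T r).const_mul _
  have H := hlin.sub hsum
  have key : ∑ r ∈ Finset.range Q, ((r : ℝ) - (Q : ℝ)) * (lam * c r)
      = lam * ∑ r ∈ Finset.range Q, poissonPMF μ r := by
    have ht := telescope2 μ Q
    calc ∑ r ∈ Finset.range Q, ((r : ℝ) - (Q : ℝ)) * (lam * c r)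
        = ∑ r ∈ Finset.range Q, -(lam * (((Q : ℝ) - r) * c r)) :=
          Finset.sum_congr rfl (fun r _ => by ring)
      _ = -(lam * ∑ r ∈ Finset.range Q, ((Q : ℝ) - r) * c r) := by
          rw [Finset.sum_neg_distrib, Finset.mul_sum]
      _ = -(lam * -(∑ r ∈ Finset.range Q, poissonPMF μ r)) := by rw [ht]
      _ = lam * ∑ r ∈ Finset.range Q, poissonPMF μ r := by ring
  have hder : lam - ∑ r ∈ Finset.range Q, ((r : ℝ) - (Q : ℝ)) * (lam * c r)
      = lam * Ptail μ Q := by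
    rw [key, Ptail_eq]
    ring
  rw [hder] at H
  exact H
end

section
/- Fix J in N with J >= 1, rates lambda : Fin J -> R with lambda_j > 0, costs b : Fin J -> R, capacities Q : Fin J -> N with Q_j >= 1, and A in R. Define C_F(T) = (A + sum over j of b_j * S(lambda_j * T, Q_j)) / T for T > 0. Then C_F is twice differentiable at every T > 0 and its second derivative equals 2 * (A - sum over j of b_j * Q_j * Ptail(lambda_j * T, Q_j + 1)) / T^3 + (sum over j of b_j * lambda_j^2 * p(lambda_j * T, Q_j - 1)) / T. -/
open scoped BigOperators

/- ### Auxiliary lemmas -/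

lemma tsum_pow_div_factorial (μ : ℝ) :
    ∑' r : ℕ, μ ^ r / (Nat.factorial r : ℝ) = Real.exp μ := by
  rw [Real.exp_eq_exp_ℝ, NormedSpace.exp_eq_tsum_div]

lemma summable_poissonPMF (μ : ℝ) : Summable (fun r => poissonPMF μ r) := by
  have := (Real.summable_pow_div_factorial μ).mul_left (Real.exp (-μ))
  simpa [poissonPMF, mul_div_assoc] using this

lemma tsum_poissonPMF (μ : ℝ) : ∑' r, poissonPMF μ r = 1 := by
  have : (fun r : ℕ => poissonPMF μ r)
      = fun r => Real.exp (-μ) * (μ ^ r / (Nat.factorial r : ℝ)) := by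
    funext r; simp [poissonPMF, mul_div_assoc]
  rw [this, tsum_mul_left, tsum_pow_div_factorial, ← Real.exp_add]
  simp

lemma pois_succ (μ : ℝ) (r : ℕ) :
    ((r : ℝ) + 1) * poissonPMF μ (r + 1) = μ * poissonPMF μ r := by
  have h : (Nat.factorial (r+1) : ℝ) = ((r : ℝ) + 1) * (Nat.factorial r : ℝ) := by
    push_cast [Nat.factorial_succ]; ring
  have hr : (Nat.factorial r : ℝ) ≠ 0 := Nat.cast_ne_zero.mpr (Nat.factorial_ne_zero r)
  have hr1 : ((r : ℝ) + 1) ≠ 0 := by positivity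
  simp only [poissonPMF, h]
  field_simp
  ring

lemma summable_mul_poissonPMF (μ : ℝ) :
    Summable (fun r : ℕ => (r : ℝ) * poissonPMF μ r) := by
  rw [← summable_nat_add_iff 1]
  have : (fun r : ℕ => ((r + 1 : ℕ) : ℝ) * poissonPMF μ (r + 1))
      = fun r => μ * poissonPMF μ r := by
    funext r; push_cast; rw [pois_succ]
  rw [this]
  exact (summable_poissonPMF μ).mul_left μ

lemma tsum_mul_poissonPMF (μ : ℝ) :
    ∑' r : ℕ, (r : ℝ) * poissonPMF μ r = μ := by
  rw [Summable.tsum_eq_zero_add (summable_mul_poissonPMF μ)]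
  simp only [Nat.cast_zero, zero_mul, zero_add]
  push_cast
  calc ∑' r : ℕ, ((r : ℝ) + 1) * poissonPMF μ (r + 1)
      = ∑' r : ℕ, μ * poissonPMF μ r := by
        refine tsum_congr fun r => ?_; rw [pois_succ]
    _ = μ := by rw [tsum_mul_left, tsum_poissonPMF, mul_one]

/-- Cumulative Poisson probability `P(D < k)` (finite sum). -/
noncomputable def phi (μ : ℝ) (k : ℕ) : ℝ :=
  ∑ r ∈ Finset.range k, poissonPMF μ r

/-- Finite-sum form of the expected shortage correction term. -/
noncomputable def psi (μ : ℝ) (Q : ℕ) : ℝ :=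
  ∑ r ∈ Finset.range Q, ((Q : ℝ) - r) * poissonPMF μ r

lemma Ptail_eq_s13 (μ : ℝ) (k : ℕ) : Ptail μ k = 1 - phi μ k := by
  have hsupp : ∀ r ∉ Finset.range k,
      (if r < k then poissonPMF μ r else 0) = 0 := by
    intro r hr
    simp [Finset.mem_range] at hr
    simp [Nat.not_lt.mpr hr]
  have hsum_ind : Summable (fun r : ℕ => if r < k then poissonPMF μ r else 0) :=
    summable_of_ne_finset_zero (s := Finset.range k) hsupp
  have key : (fun r : ℕ => if k ≤ r then poissonPMF μ r else 0)
      = fun r => poissonPMF μ r - (if r < k then poissonPMF μ r else 0) := by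
    funext r
    by_cases h : k ≤ r
    · simp [h, Nat.not_lt.mpr h]
    · simp [h, Nat.lt_of_not_le h]
  rw [Ptail, key, Summable.tsum_sub (summable_poissonPMF μ) hsum_ind, tsum_poissonPMF,
    tsum_eq_sum hsupp]
  congr 1
  refine Finset.sum_congr rfl fun r hr => ?_
  simp [Finset.mem_range.mp hr, phi]

lemma shortage_eq_s13 (μ : ℝ) (Q : ℕ) : shortage μ Q = μ - Q + psi μ Q := by
  have hf : Summable (fun r : ℕ => ((r : ℝ) - Q) * poissonPMF μ r) := by
    have := (summable_mul_poissonPMF μ).sub ((summable_poissonPMF μ).mul_left (Q : ℝ))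
    refine this.congr fun r => ?_
    ring
  have hsupp : ∀ r ∉ Finset.range Q,
      (if r < Q then ((r : ℝ) - Q) * poissonPMF μ r else 0) = 0 := by
    intro r hr
    simp [Finset.mem_range] at hr
    simp [Nat.not_lt.mpr hr]
  have hsum_ind : Summable (fun r : ℕ => if r < Q then ((r : ℝ) - Q) * poissonPMF μ r else 0) :=
    summable_of_ne_finset_zero (s := Finset.range Q) hsupp
  have key : (fun r : ℕ => if Q ≤ r then ((r : ℝ) - Q) * poissonPMF μ r else 0)
      = fun r : ℕ => ((r : ℝ) - Q) * poissonPMF μ r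
        - (if r < Q then ((r : ℝ) - Q) * poissonPMF μ r else 0) := by
    funext r
    by_cases h : Q ≤ r
    · simp [h, Nat.not_lt.mpr h]
    · simp [h, Nat.lt_of_not_le h]
  have htsum_f : ∑' r : ℕ, ((r : ℝ) - Q) * poissonPMF μ r = μ - Q := by
    have : (fun r : ℕ => ((r : ℝ) - Q) * poissonPMF μ r)
        = fun r : ℕ => (r : ℝ) * poissonPMF μ r - (Q : ℝ) * poissonPMF μ r := by
      funext r; ring
    rw [this, Summable.tsum_sub (summable_mul_poissonPMF μ) ((summable_poissonPMF μ).mul_left _),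
      tsum_mul_poissonPMF, tsum_mul_left, tsum_poissonPMF, mul_one]
  rw [shortage, key, Summable.tsum_sub hf hsum_ind, htsum_f, tsum_eq_sum hsupp]
  have : ∑ r ∈ Finset.range Q, (if r < Q then ((r : ℝ) - Q) * poissonPMF μ r else 0)
      = - psi μ Q := by
    rw [psi, ← Finset.sum_neg_distrib]
    refine Finset.sum_congr rfl fun r hr => ?_
    simp [Finset.mem_range.mp hr]
    ring
  rw [this]
  ring

lemma hasDerivAt_exp_neg (μ : ℝ) :
    HasDerivAt (fun x : ℝ => Real.exp (-x)) (-Real.exp (-μ)) μ := by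
  simpa [Function.comp_def] using (Real.hasDerivAt_exp (-μ)).comp μ (hasDerivAt_neg μ)

lemma hasDerivAt_pois (μ : ℝ) (r : ℕ) :
    HasDerivAt (fun x => poissonPMF x r)
      ((if r = 0 then 0 else poissonPMF μ (r - 1)) - poissonPMF μ r) μ := by
  have h : HasDerivAt (fun x : ℝ => Real.exp (-x) * x ^ r / (Nat.factorial r : ℝ))
      ((-Real.exp (-μ) * μ ^ r + Real.exp (-μ) * ((r : ℝ) * μ ^ (r - 1)))
        / (Nat.factorial r : ℝ)) μ :=
    ((hasDerivAt_exp_neg μ).mul (hasDerivAt_pow r μ)).div_const _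
  have : (fun x => poissonPMF x r)
      = fun x : ℝ => Real.exp (-x) * x ^ r / (Nat.factorial r : ℝ) := by
    funext x; rfl
  rw [this]
  convert h using 1
  rcases r with _ | s
  · simp [poissonPMF]
  · simp only [Nat.succ_ne_zero, if_neg, Nat.succ_sub_one]
    have hfac : (Nat.factorial (s+1) : ℝ) = ((s : ℝ) + 1) * (Nat.factorial s : ℝ) := by
      push_cast [Nat.factorial_succ]; ring
    have hs : (Nat.factorial s : ℝ) ≠ 0 := Nat.cast_ne_zero.mpr (Nat.factorial_ne_zero s)
    have hs1 : ((s : ℝ) + 1) ≠ 0 := by positivity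
    simp only [poissonPMF, hfac]
    push_cast
    field_simp
    ring

lemma hasDerivAt_phi_succ (μ : ℝ) (k : ℕ) :
    HasDerivAt (fun x => phi x (k + 1)) (-poissonPMF μ k) μ := by
  induction k with
  | zero =>
    have : (fun x => phi x 1) = fun x => poissonPMF x 0 := by
      funext x; simp [phi]
    rw [this]
    simpa using hasDerivAt_pois μ 0
  | succ s ih =>
    have : (fun x => phi x (s + 2)) = fun x => phi x (s + 1) + poissonPMF x (s + 1) := by
      funext x; simp [phi, Finset.sum_range_succ]
    rw [this]
    have h2 := hasDerivAt_pois μ (s + 1)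
    simp only [Nat.succ_ne_zero, if_neg, Nat.succ_sub_one] at h2
    have := ih.add h2
    refine this.congr_deriv ?_
    simp only [if_neg (by trivial : ¬False)]
    ring

lemma psi_succ (μ : ℝ) (Q : ℕ) : psi μ (Q + 1) = psi μ Q + phi μ (Q + 1) := by
  simp only [psi, phi, Finset.sum_range_succ]
  push_cast
  have : ∀ r ∈ Finset.range Q,
      ((Q : ℝ) + 1 - r) * poissonPMF μ r
        = ((Q : ℝ) - r) * poissonPMF μ r + poissonPMF μ r := by
    intro r _; ring
  rw [Finset.sum_congr rfl this, Finset.sum_add_distrib]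
  ring

lemma hasDerivAt_psi (μ : ℝ) (Q : ℕ) :
    HasDerivAt (fun x => psi x Q) (-phi μ Q) μ := by
  induction Q with
  | zero =>
    have : (fun x => psi x 0) = fun _ => (0 : ℝ) := by funext x; simp [psi]
    rw [this]
    simp only [phi, Finset.range_zero, Finset.sum_empty, neg_zero]
    exact hasDerivAt_const μ 0
  | succ s ih =>
    have : (fun x => psi x (s + 1)) = fun x => psi x s + phi x (s + 1) := by
      funext x; exact psi_succ x s
    rw [this]
    have h := ih.add (hasDerivAt_phi_succ μ s)
    have hphi : phi μ (s + 1) = phi μ s + poissonPMF μ s := by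
      simp [phi, Finset.sum_range_succ]
    rw [hphi]
    refine h.congr_deriv ?_
    ring

lemma psi_phi_identity (μ : ℝ) (Q : ℕ) :
    psi μ Q + μ * phi μ Q = Q * phi μ (Q + 1) := by
  induction Q with
  | zero => simp [psi, phi]
  | succ s ih =>
    have h1 : psi μ (s + 1) = psi μ s + phi μ (s + 1) := psi_succ μ s
    have h2 : phi μ (s + 1) = phi μ s + poissonPMF μ s := by
      simp [phi, Finset.sum_range_succ]
    have h3 : phi μ (s + 2) = phi μ (s + 1) + poissonPMF μ (s + 1) := by
      simp [phi, Finset.sum_range_succ]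
    have h4 : μ * poissonPMF μ s = ((s : ℝ) + 1) * poissonPMF μ (s + 1) :=
      (pois_succ μ s).symm
    push_cast
    rw [h1, h3, h2]
    nlinarith [ih, h4]

lemma hasDerivAt_shortage (μ : ℝ) (Q : ℕ) :
    HasDerivAt (fun x => shortage x Q) (Ptail μ Q) μ := by
  have hfun : (fun x => shortage x Q) = fun x => x - (Q : ℝ) + psi x Q := by
    funext x; exact shortage_eq_s13 x Q
  rw [hfun, Ptail_eq_s13]
  have h := ((hasDerivAt_id μ).sub_const (Q : ℝ)).add (hasDerivAt_psi μ Q)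
  exact h.congr_deriv (by ring)

lemma hasDerivAt_Ptail_succ (μ : ℝ) (k : ℕ) :
    HasDerivAt (fun x => Ptail x (k + 1)) (poissonPMF μ k) μ := by
  have hfun : (fun x => Ptail x (k + 1)) = fun x => 1 - phi x (k + 1) := by
    funext x; exact Ptail_eq_s13 x (k + 1)
  rw [hfun]
  have h := (hasDerivAt_const μ (1 : ℝ)).sub (hasDerivAt_phi_succ μ k)
  exact h.congr_deriv (by ring)

lemma shortage_key (μ : ℝ) (Q : ℕ) :
    shortage μ Q = μ * Ptail μ Q - Q * Ptail μ (Q + 1) := by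
  rw [shortage_eq_s13, Ptail_eq_s13, Ptail_eq_s13]
  have := psi_phi_identity μ Q
  nlinarith [this]

/-- second derivative of the fixed-cycle average cost. -/
theorem fixedCycleCost_second_deriv (J : ℕ) (hJ : 1 ≤ J)
    (lam : Fin J → ℝ) (hlam : ∀ j, 0 < lam j)
    (b : Fin J → ℝ) (Q : Fin J → ℕ) (hQ : ∀ j, 1 ≤ Q j) (A : ℝ)
    (T : ℝ) (hT : 0 < T) :
    DifferentiableAt ℝ
      (fun t => (A + ∑ j, b j * shortage (lam j * t) (Q j)) / t) T ∧
    HasDerivAt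
      (deriv (fun t => (A + ∑ j, b j * shortage (lam j * t) (Q j)) / t))
      (2 * (A - ∑ j, b j * (Q j : ℝ) * Ptail (lam j * T) (Q j + 1)) / T ^ 3
        + (∑ j, b j * (lam j) ^ 2 * poissonPMF (lam j * T) (Q j - 1)) / T)
      T := by
  -- derivative of the numerator
  have hg : ∀ t : ℝ, HasDerivAt (fun t => A + ∑ j, b j * shortage (lam j * t) (Q j))
      (∑ j, b j * (Ptail (lam j * t) (Q j) * lam j)) t := by
    intro t
    refine HasDerivAt.const_add A (HasDerivAt.fun_sum fun j _ => ?_)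
    have h1 : HasDerivAt (fun t : ℝ => lam j * t) (lam j) t := by
      simpa using (hasDerivAt_id t).const_mul (lam j)
    have h2 := (hasDerivAt_shortage (lam j * t) (Q j)).comp t h1
    exact h2.const_mul (b j)
  -- derivative of the quotient at any positive point
  have hC : ∀ t : ℝ, t ≠ 0 → HasDerivAt
      (fun t => (A + ∑ j, b j * shortage (lam j * t) (Q j)) / t)
      (((∑ j, b j * (Ptail (lam j * t) (Q j) * lam j)) * t
        - (A + ∑ j, b j * shortage (lam j * t) (Q j)) * 1) / t ^ 2) t := by
    intro t ht
    exact (hg t).div (hasDerivAt_id t) ht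
  refine ⟨(hC T hT.ne').differentiableAt, ?_⟩
  -- closed form of the derivative near T
  set D : ℝ → ℝ := fun t =>
    ((∑ j, b j * (Ptail (lam j * t) (Q j) * lam j)) * t
      - (A + ∑ j, b j * shortage (lam j * t) (Q j)) * 1) / t ^ 2 with hD
  have hEq : deriv (fun t => (A + ∑ j, b j * shortage (lam j * t) (Q j)) / t)
      =ᶠ[nhds T] D := by
    filter_upwards [isOpen_Ioi.mem_nhds hT] with t ht
    exact (hC t (ne_of_gt ht)).deriv
  -- derivative of D at T
  have hg2 : HasDerivAt (fun t => ∑ j, b j * (Ptail (lam j * t) (Q j) * lam j))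
      (∑ j, b j * (poissonPMF (lam j * T) (Q j - 1) * lam j * lam j)) T := by
    refine HasDerivAt.fun_sum fun j _ => ?_
    have h1 : HasDerivAt (fun t : ℝ => lam j * t) (lam j) T := by
      simpa using (hasDerivAt_id T).const_mul (lam j)
    have hk : Q j - 1 + 1 = Q j := Nat.succ_pred_eq_of_pos (hQ j)
    have h0 := hasDerivAt_Ptail_succ (lam j * T) (Q j - 1)
    rw [hk] at h0
    have h2 := (h0.comp T h1).mul_const (lam j)
    have h3 := h2.const_mul (b j)
    exact h3
  have hN : HasDerivAt (fun t =>
      (∑ j, b j * (Ptail (lam j * t) (Q j) * lam j)) * t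
        - (A + ∑ j, b j * shortage (lam j * t) (Q j)) * 1)
      ((∑ j, b j * (poissonPMF (lam j * T) (Q j - 1) * lam j * lam j)) * T
        + (∑ j, b j * (Ptail (lam j * T) (Q j) * lam j)) * 1
        - (∑ j, b j * (Ptail (lam j * T) (Q j) * lam j)) * 1) T := by
    exact (hg2.mul (hasDerivAt_id T)).sub ((hg T).mul_const 1)
  have hpow : HasDerivAt (fun t : ℝ => t ^ 2) (2 * T ^ 1) T := by
    simpa using hasDerivAt_pow 2 T
  have hDT := hN.div hpow (by positivity)
  have hfinal : HasDerivAt D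
      ((((∑ j, b j * (poissonPMF (lam j * T) (Q j - 1) * lam j * lam j)) * T
        + (∑ j, b j * (Ptail (lam j * T) (Q j) * lam j)) * 1
        - (∑ j, b j * (Ptail (lam j * T) (Q j) * lam j)) * 1) * T ^ 2
        - ((∑ j, b j * (Ptail (lam j * T) (Q j) * lam j)) * T
          - (A + ∑ j, b j * shortage (lam j * T) (Q j)) * 1) * (2 * T ^ 1))
        / (T ^ 2) ^ 2) T := hDT
  have hgoal := hfinal.congr_of_eventuallyEq hEq
  refine hgoal.congr_deriv ?_
  -- now the algebraic identity
  have hS : ∑ j, b j * shortage (lam j * T) (Q j)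
      = T * (∑ j, b j * (Ptail (lam j * T) (Q j) * lam j))
        - ∑ j, b j * (Q j : ℝ) * Ptail (lam j * T) (Q j + 1) := by
    rw [Finset.mul_sum, ← Finset.sum_sub_distrib]
    refine Finset.sum_congr rfl fun j _ => ?_
    rw [shortage_key (lam j * T) (Q j)]
    ring
  have hE : ∑ j, b j * (lam j) ^ 2 * poissonPMF (lam j * T) (Q j - 1)
      = ∑ j, b j * (poissonPMF (lam j * T) (Q j - 1) * lam j * lam j) := by
    refine Finset.sum_congr rfl fun j _ => ?_
    ring
  rw [hE, hS]
  have hT' : T ≠ 0 := hT.ne'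
  field_simp
  ring
end
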